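/- arXiv:1710.04621 — 2 statements merged into one kernel-verified Lean document; each statement's English description precedes it below -/
import Mathlib

section
/- If f : ℝ → ℝ is of bounded variation on ℝ with |f| ≤ M, and χ is continuous with A_χ := sup_{u∈ℝ}∑_{k∈ℤ}|χ(u−k)| < ∞, then the sampling series with averaged kernel S̄ᵐ_w f is differentiable everywhere, with derivative (S̄ᵐ_w f)'(t) = (w/m) ∑_{k∈ℤ} f(k/w)[χ(wt−k+m/2) − χ(wt−k−m/2)], and |(S̄ᵐ_w f)'(t)| ≤ 2wM A_χ / m for all t ∈ ℝ. -/
/-!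
Writing the averaged kernel as a difference of integrals of `χ` over windows of length `m`,
summation by parts shows that the increment of the series between `t` and `t'` is
`(1/m) ∑ₖ (f(k/w) - f((k-m)/w)) ∫_{wt+m/2}^{wt'+m/2} χ(y - k) dy`.
Bounded variation makes these coefficients absolutely summable, and `|χ| ≤ A`, so the termwise
derivatives have a summable bound and the series may be differentiated termwise. Summing by parts
back gives the stated derivative, a difference of two series `∑ₖ f(k/w) χ(u - k)`, each at most
`M A` in absolute value.
-/

open MeasureTheory

noncomputable def avgKernel (χ : ℝ → ℝ) (m : ℕ) (t : ℝ) : ℝ :=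
  (1 / (m : ℝ)) * ∫ v in (-((m : ℝ) / 2))..((m : ℝ) / 2), χ (t + v)

/-- The generalized sampling series based on the averaged kernel. -/
noncomputable def avgSamplingSeries (χ f : ℝ → ℝ) (m : ℕ) (w t : ℝ) : ℝ :=
  ∑' k : ℤ, f ((k : ℝ) / w) * avgKernel χ m (w * t - (k : ℝ))

open Finset in
theorem BoundedVariationOn.summable_dist_comp_add_one {α E : Type*} [LinearOrder α]
    [PseudoMetricSpace E] {f : α → E} (hf : BoundedVariationOn f Set.univ) {u : ℤ → α}
    (hu : Monotone u) : Summable fun k : ℤ => dist (f (u (k + 1))) (f (u k)) := by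
  refine summable_of_sum_le (c := (eVariationOn f Set.univ).toReal)
    (fun k => dist_nonneg) fun F => ?_
  obtain ⟨N, hN⟩ := (F.image Int.natAbs).exists_nat_subset_range
  have hF : F ⊆ (range (2 * N)).image fun i : ℕ => (i : ℤ) - N := by
    intro k hk
    have hk' := hN (mem_image_of_mem _ hk)
    simp only [mem_range, mem_image] at hk' ⊢
    exact ⟨(k + N).toNat, by omega, by omega⟩
  have hvar : ∑ i ∈ range (2 * N), dist (f (u ((i : ℤ) - N + 1))) (f (u ((i : ℤ) - N)))
      ≤ (eVariationOn f Set.univ).toReal := by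
    have h := eVariationOn.sum_le (f := f) (n := 2 * N) (s := Set.univ)
      (u := fun i : ℕ => u ((i : ℤ) - N))
      (hu.comp fun i j hij => by simpa using hij) fun _ => Set.mem_univ _
    simp only [Nat.cast_add, Nat.cast_one, edist_dist] at h
    rw [← ENNReal.ofReal_sum_of_nonneg fun _ _ => dist_nonneg,
      ENNReal.ofReal_le_iff_le_toReal hf] at h
    simpa only [sub_add_eq_add_sub] using h
  calc ∑ k ∈ F, dist (f (u (k + 1))) (f (u k))
      ≤ ∑ k ∈ (range (2 * N)).image fun i : ℕ => (i : ℤ) - N, dist (f (u (k + 1))) (f (u k)) :=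
        sum_le_sum_of_subset_of_nonneg hF fun _ _ _ => dist_nonneg
    _ ≤ _ := (sum_image_le_of_nonneg fun _ _ => dist_nonneg).trans hvar

theorem BoundedVariationOn.summable_dist_comp_sub {α E : Type*} [LinearOrder α]
    [PseudoMetricSpace E] {f : α → E} (hf : BoundedVariationOn f Set.univ) {u : ℤ → α}
    (hu : Monotone u) (n : ℕ) : Summable fun k : ℤ => dist (f (u k)) (f (u (k - n))) := by
  have hstep (i : ℕ) : Summable fun k : ℤ => dist (f (u (k - i))) (f (u (k - (i + 1 : ℕ)))) := by
    refine ((Equiv.subRight ((i + 1 : ℕ) : ℤ)).summable_iff.mpr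
      (hf.summable_dist_comp_add_one hu)).congr fun k => ?_
    simp only [Function.comp_apply, Equiv.subRight_apply]
    congr 3; push_cast; ring
  refine Summable.of_nonneg_of_le (fun _ => dist_nonneg) (fun k => ?_)
    (summable_sum (s := Finset.range n) fun i _ => hstep i)
  simpa using dist_le_range_sum_dist (fun i : ℕ => f (u (k - i))) n

theorem tsum_mul_sub_shift {ι R : Type*} [AddCommGroup ι] [Ring R] [TopologicalSpace R]
    [IsTopologicalAddGroup R] [T2Space R] {a p : ι → R} (m : ι)
    (h₁ : Summable fun k => a k * p k) (h₂ : Summable fun k => a (k - m) * p k) :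
    ∑' k, a k * (p k - p (k + m)) = ∑' k, (a k - a (k - m)) * p k := by
  have hshift : HasSum (fun k => a k * p (k + m)) (∑' k, a (k - m) * p k) := by
    simpa [Function.comp_def] using (Equiv.addRight m).hasSum_iff.mpr h₂.hasSum
  simp only [mul_sub, sub_mul]
  rw [(h₁.hasSum.sub hshift).tsum_eq, (h₁.hasSum.sub h₂.hasSum).tsum_eq]

theorem summable_mul_of_abs_le {ι : Type*} {c g : ι → ℝ} {M : ℝ} (hc : ∀ k, |c k| ≤ M)
    (hg : Summable fun k => |g k|) : Summable fun k => c k * g k :=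
  (hg.mul_left M).of_norm_bounded fun k => by
    rw [Real.norm_eq_abs, abs_mul]
    exact mul_le_mul_of_nonneg_right (hc k) (abs_nonneg _)

theorem abs_tsum_mul_le {c g : ℤ → ℝ} {M : ℝ} (hc : ∀ k, |c k| ≤ M)
    (hg : Summable fun k => |g k|) : |∑' k, c k * g k| ≤ M * ∑' k, |g k| := by
  have hM : 0 ≤ M := (abs_nonneg _).trans (hc 0)
  have hcg : Summable fun k => |c k * g k| := (summable_mul_of_abs_le hc hg).abs
  calc |∑' k, c k * g k| ≤ ∑' k, |c k * g k| := by
        simpa only [Real.norm_eq_abs] using norm_tsum_le_tsum_norm (f := fun k => c k * g k) hcg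
    _ ≤ ∑' k, M * |g k| := hcg.tsum_le_tsum (fun k => by
        rw [abs_mul]; exact mul_le_mul_of_nonneg_right (hc k) (abs_nonneg _)) (hg.mul_left M)
    _ = M * ∑' k, |g k| := tsum_mul_left

section Kernel

variable {χ : ℝ → ℝ} {A : ℝ}

theorem abs_le_of_tsum_abs_sub_int_le (habs : ∀ u : ℝ, Summable fun k : ℤ => |χ (u - k)|)
    (hA : ∀ u : ℝ, ∑' k : ℤ, |χ (u - k)| ≤ A) (x : ℝ) : |χ x| ≤ A := by
  simpa using ((habs x).le_tsum 0 fun _ _ => abs_nonneg _).trans (hA x)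

theorem summable_abs_integral_comp_sub_int (hcont : Continuous χ)
    (habs : ∀ u : ℝ, Summable fun k : ℤ => |χ (u - k)|)
    (hA : ∀ u : ℝ, ∑' k : ℤ, |χ (u - k)| ≤ A) (a b : ℝ) :
    Summable fun k : ℤ => |∫ y in a..b, χ (y - k)| := by
  wlog hab : a ≤ b generalizing a b
  · simpa only [intervalIntegral.integral_symm a b, abs_neg] using this b a (le_of_not_ge hab)
  have hcont' (k : ℤ) : Continuous fun y => |χ (y - k)| := by fun_prop
  refine Summable.of_nonneg_of_le (fun _ => abs_nonneg _)
    (fun k => intervalIntegral.abs_integral_le_integral_abs hab) ?_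
  refine summable_of_sum_le (c := (b - a) * A)
    (fun k => intervalIntegral.integral_nonneg hab fun _ _ => abs_nonneg _) fun F => ?_
  rw [← intervalIntegral.integral_finsetSum fun k _ => (hcont' k).intervalIntegrable a b]
  calc ∫ y in a..b, ∑ k ∈ F, |χ (y - k)| ≤ ∫ _ in a..b, A :=
        intervalIntegral.integral_mono_on hab
          ((continuous_finsetSum F fun k _ => hcont' k).intervalIntegrable a b)
          intervalIntegrable_const fun y _ =>
            ((habs y).sum_le_tsum F fun _ _ => abs_nonneg _).trans (hA y)
    _ = (b - a) * A := by simp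

theorem avgKernel_sub_int_eq (m : ℕ) (x : ℝ) (k : ℤ) :
    avgKernel χ m (x - k) = 1 / m * ∫ y in (x - m / 2)..(x + m / 2), χ (y - k) := by
  rw [avgKernel, sub_eq_add_neg x ((m : ℝ) / 2), ← intervalIntegral.integral_comp_add_left]
  congr 2 with v
  ring_nf

/-- Moving the averaging window `[x - m/2, x + m/2]` to `[x' - m/2, x' + m/2]` gains an interval
at the right end and loses one at the left end; the latter is the former translated by `m`. -/
theorem avgKernel_sub_int_sub_avgKernel_sub_int (hcont : Continuous χ) (m : ℕ) (x x' : ℝ)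
    (k : ℤ) :
    avgKernel χ m (x' - k) - avgKernel χ m (x - k) =
      1 / m * ((∫ y in (x + m / 2)..(x' + m / 2), χ (y - k)) -
        ∫ y in (x + m / 2)..(x' + m / 2), χ (y - ↑(k + m))) := by
  have hint (a b : ℝ) : IntervalIntegrable (fun y => χ (y - k)) volume a b :=
    (hcont.comp (continuous_sub_right _)).intervalIntegrable a b
  have htranslate : ∫ y in (x - m / 2)..(x' - m / 2), χ (y - k) =
      ∫ y in (x + m / 2)..(x' + m / 2), χ (y - ↑(k + m)) := by
    rw [intervalIntegral.integral_comp_sub_right (fun y => χ y),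
      intervalIntegral.integral_comp_sub_right (fun y => χ y)]
    congr 1 <;> push_cast <;> ring
  rw [avgKernel_sub_int_eq, avgKernel_sub_int_eq, ← mul_sub, ← htranslate,
    intervalIntegral.integral_interval_sub_interval_comm' (hint _ _) (hint _ _) (hint _ _)]

theorem abs_tsum_mul_sub_le (habs : ∀ u : ℝ, Summable fun k : ℤ => |χ (u - k)|)
    (hA : ∀ u : ℝ, ∑' k : ℤ, |χ (u - k)| ≤ A) {M : ℝ} {c : ℤ → ℝ} (hc : ∀ k, |c k| ≤ M)
    (x y : ℝ) : |∑' k : ℤ, c k * (χ (x - k) - χ (y - k))| ≤ 2 * M * A := by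
  have hM : 0 ≤ M := (abs_nonneg _).trans (hc 0)
  simp_rw [mul_sub]
  rw [(summable_mul_of_abs_le hc (habs x)).tsum_sub (summable_mul_of_abs_le hc (habs y))]
  calc _ ≤ |∑' k : ℤ, c k * χ (x - k)| + |∑' k : ℤ, c k * χ (y - k)| := abs_sub _ _
    _ ≤ M * A + M * A := by
      gcongr
      · exact (abs_tsum_mul_le hc (habs x)).trans (by gcongr; exact hA x)
      · exact (abs_tsum_mul_le hc (habs y)).trans (by gcongr; exact hA y)
    _ = 2 * M * A := by ring

end Kernel

section Series

variable {χ f : ℝ → ℝ} {M A : ℝ}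

theorem avgSamplingSeries_sub (hcont : Continuous χ)
    (habs : ∀ u : ℝ, Summable fun k : ℤ => |χ (u - k)|)
    (hA : ∀ u : ℝ, ∑' k : ℤ, |χ (u - k)| ≤ A) (hf : ∀ x, |f x| ≤ M) (m : ℕ) (w t t' : ℝ) :
    avgSamplingSeries χ f m w t' - avgSamplingSeries χ f m w t =
      1 / m * ∑' k : ℤ, (f (k / w) - f (↑(k - m) / w)) *
        ∫ y in (w * t + m / 2)..(w * t' + m / 2), χ (y - k) := by
  have hS (x : ℝ) : Summable fun k : ℤ => f (k / w) * avgKernel χ m (x - k) := by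
    simp_rw [avgKernel_sub_int_eq, mul_left_comm (f _)]
    exact (summable_mul_of_abs_le (fun k => hf _)
      (summable_abs_integral_comp_sub_int hcont habs hA _ _)).mul_left _
  have hI := summable_abs_integral_comp_sub_int hcont habs hA (w * t + m / 2) (w * t' + m / 2)
  rw [avgSamplingSeries, avgSamplingSeries, ← (hS _).tsum_sub (hS _)]
  simp_rw [← mul_sub, avgKernel_sub_int_sub_avgKernel_sub_int hcont, mul_left_comm (f _)]
  rw [tsum_mul_left, ← tsum_mul_sub_shift (m : ℤ) (summable_mul_of_abs_le (fun k => hf _) hI)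
    (summable_mul_of_abs_le (fun k => hf _) hI)]

theorem hasDerivAt_avgSamplingSeries (hcont : Continuous χ)
    (habs : ∀ u : ℝ, Summable fun k : ℤ => |χ (u - k)|)
    (hA : ∀ u : ℝ, ∑' k : ℤ, |χ (u - k)| ≤ A) (hBV : BoundedVariationOn f Set.univ)
    (hf : ∀ x, |f x| ≤ M) (m : ℕ) {w : ℝ} (hw : 0 < w) (t : ℝ) :
    HasDerivAt (avgSamplingSeries χ f m w)
      (w / m * ∑' k : ℤ, (f (k / w) - f (↑(k - m) / w)) * χ (w * t + m / 2 - k)) t := by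
  set d : ℤ → ℝ := fun k => f (k / w) - f (↑(k - m) / w)
  have hd : Summable fun k => |d k| := by
    have hmono : Monotone fun k : ℤ => (k : ℝ) / w := fun i j hij =>
      div_le_div_of_nonneg_right (Int.cast_le.mpr hij) hw.le
    simpa only [Real.dist_eq] using hBV.summable_dist_comp_sub hmono m
  set g : ℤ → ℝ → ℝ := fun k z => d k * ∫ y in (w * t + m / 2)..(w * z + m / 2), χ (y - k)
  have hg (k : ℤ) (z : ℝ) : HasDerivAt (g k) (d k * (χ (w * z + m / 2 - k) * w)) z := by
    have hχ : Continuous fun y => χ (y - k) := by fun_prop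
    have hlin : HasDerivAt (fun z => w * z + m / 2) w z := by
      simpa using ((hasDerivAt_id z).const_mul w).add_const ((m : ℝ) / 2)
    exact ((hχ.integral_hasStrictDerivAt _ _).hasDerivAt.comp z hlin).const_mul (d k)
  have hg' (k : ℤ) (z : ℝ) : ‖d k * (χ (w * z + m / 2 - k) * w)‖ ≤ |d k| * (A * w) := by
    rw [Real.norm_eq_abs, abs_mul, abs_mul, abs_of_pos hw]
    gcongr
    exact abs_le_of_tsum_abs_sub_int_le habs hA _
  have hseries : HasDerivAt (fun z => ∑' k, g k z)
      (∑' k, d k * (χ (w * t + m / 2 - k) * w)) t :=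
    hasDerivAt_tsum (hd.mul_right (A * w)) hg hg' (y₀ := t) (by simp [g]) t
  have hS : avgSamplingSeries χ f m w =
      fun z => avgSamplingSeries χ f m w t + 1 / m * ∑' k, g k z := by
    funext z
    rw [← avgSamplingSeries_sub hcont habs hA hf]
    ring
  rw [hS]
  refine ((hseries.const_mul (1 / (m : ℝ))).const_add _).congr_deriv ?_
  simp_rw [← mul_assoc, tsum_mul_right]
  ring

end Series

theorem stmt5_general (χ f : ℝ → ℝ) (M : ℝ)
    (hBV : BoundedVariationOn f Set.univ) (hf : ∀ x : ℝ, |f x| ≤ M)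
    (hcont : Continuous χ) (A : ℝ)
    (habs : ∀ u : ℝ, Summable fun k : ℤ => |χ (u - k)|)
    (hA : ∀ u : ℝ, ∑' k : ℤ, |χ (u - k)| ≤ A)
    (m : ℕ) (w : ℝ) (hw : 0 < w) :
    ∀ t : ℝ,
      HasDerivAt (avgSamplingSeries χ f m w)
        ((w / (m : ℝ)) * ∑' k : ℤ, f ((k : ℝ) / w) *
          (χ (w * t - (k : ℝ) + (m : ℝ) / 2) - χ (w * t - (k : ℝ) - (m : ℝ) / 2))) t ∧
      |(w / (m : ℝ)) * ∑' k : ℤ, f ((k : ℝ) / w) *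
          (χ (w * t - (k : ℝ) + (m : ℝ) / 2) - χ (w * t - (k : ℝ) - (m : ℝ) / 2))|
        ≤ 2 * w * M * A / (m : ℝ) := by
  intro t
  have hwindow (k : ℤ) : χ (w * t - k + m / 2) - χ (w * t - k - m / 2) =
      χ (w * t + m / 2 - k) - χ (w * t - m / 2 - k) := by ring_nf
  simp only [hwindow]
  constructor
  · have hshift (k : ℤ) : χ (w * t - m / 2 - k) = χ (w * t + m / 2 - ↑(k + m)) := by
      push_cast; ring_nf
    simp only [hshift]
    rw [tsum_mul_sub_shift (m : ℤ) (summable_mul_of_abs_le (fun k => hf _) (habs _))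
      (summable_mul_of_abs_le (fun k => hf _) (habs _))]
    exact hasDerivAt_avgSamplingSeries hcont habs hA hBV hf m hw t
  · rw [abs_mul, abs_of_nonneg (by positivity : 0 ≤ w / m)]
    calc _ ≤ w / m * (2 * M * A) :=
          mul_le_mul_of_nonneg_left (abs_tsum_mul_sub_le habs hA (fun k => hf _) _ _)
            (by positivity)
      _ = 2 * w * M * A / m := by ring

theorem stmt5 (χ f : ℝ → ℝ) (M : ℝ)
    (hBV : BoundedVariationOn f Set.univ) (hf : ∀ x : ℝ, |f x| ≤ M)
    (hcont : Continuous χ) (A : ℝ)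
    (habs : ∀ u : ℝ, Summable fun k : ℤ => |χ (u - k)|)
    (hA : ∀ u : ℝ, ∑' k : ℤ, |χ (u - k)| ≤ A)
    (m : ℕ) (hm : 1 ≤ m) (w : ℝ) (hw : 0 < w) :
    ∀ t : ℝ,
      HasDerivAt (avgSamplingSeries χ f m w)
        ((w / (m : ℝ)) * ∑' k : ℤ, f ((k : ℝ) / w) *
          (χ (w * t - (k : ℝ) + (m : ℝ) / 2) - χ (w * t - (k : ℝ) - (m : ℝ) / 2))) t ∧
      |(w / (m : ℝ)) * ∑' k : ℤ, f ((k : ℝ) / w) *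
          (χ (w * t - (k : ℝ) + (m : ℝ) / 2) - χ (w * t - (k : ℝ) - (m : ℝ) / 2))|
        ≤ 2 * w * M * A / (m : ℝ) :=
  stmt5_general χ f M hBV hf hcont A habs hA m w hw
end

section
/- Under the hypotheses on f and χ, the derivative of the averaged sampling series can be rewritten as a finite-difference sum: (S̄ᵐ_w f)'(t) = (w/m) ∑_{k∈ℤ} [f(k/w) − f((k−m)/w)] χ(wt − k + m/2) for all t ∈ ℝ. -/
open MeasureTheory

/-!
Up to the factor `1/m`, the `k`-th term of the series is `f(k/w) ∫_{-m/2}^{m/2} χ(x - k + v) dv`,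
whose derivative is `f(k/w) (χ(x - k + m/2) - χ(x - k - m/2))`. The bound `∑ₖ |χ(u - k)| ≤ A`
dominates the series of these derivatives uniformly, so it can be integrated termwise and the
fundamental theorem of calculus differentiates the series, provided the derived series is
continuous. Shifting `k ↦ k + m` in its second half rewrites it as
`∑ₖ (f(k/w) - f((k-m)/w)) χ(x - k + m/2)`, whose coefficients are absolutely summable because `f`
has bounded variation; this gives both the continuity and the stated formula.
-/

section BoundedVariation

variable {E : Type*} [PseudoMetricSpace E] {φ : ℤ → E}

open Set Finset in
theorem BoundedVariationOn.summable_dist_add_one (hφ : BoundedVariationOn φ univ) :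
    Summable fun k => dist (φ (k + 1)) (φ k) := by
  refine summable_of_sum_le (c := (eVariationOn φ univ).toReal) (fun _ => dist_nonneg)
    fun s => ?_
  obtain ⟨N, hN⟩ : ∃ N : ℕ, ∀ k ∈ s, k.natAbs < N :=
    ⟨s.sup Int.natAbs + 1, fun k hk => Nat.lt_succ_of_le (le_sup hk)⟩
  set u : ℕ → ℤ := fun i => i - N
  have hs : s ⊆ (range (2 * N)).image u := fun k hk => by
    have := hN k hk
    exact mem_image.2 ⟨(k + N).toNat, mem_range.2 (by omega), by simp only [u]; omega⟩
  have hvar := eVariationOn.sum_le (f := φ) (n := 2 * N) (u := u)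
    (fun i j hij => by simp only [u]; omega) fun _ => mem_univ _
  calc ∑ k ∈ s, dist (φ (k + 1)) (φ k)
      ≤ ∑ k ∈ (range (2 * N)).image u, dist (φ (k + 1)) (φ k) :=
        sum_le_sum_of_subset_of_nonneg hs fun _ _ _ => dist_nonneg
    _ = ∑ i ∈ range (2 * N), dist (φ (u (i + 1))) (φ (u i)) := by
        rw [sum_image fun i _ j _ h => by simpa [u] using h]
        refine sum_congr rfl fun i _ => ?_
        simp only [u]; push_cast; ring_nf
    _ ≤ (eVariationOn φ univ).toReal := by
        rw [← ENNReal.ofReal_le_iff_le_toReal hφ,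
          ENNReal.ofReal_sum_of_nonneg fun _ _ => dist_nonneg]
        simpa only [edist_dist] using hvar

theorem BoundedVariationOn.summable_dist_sub_natCast (hφ : BoundedVariationOn φ Set.univ)
    (m : ℕ) : Summable fun k => dist (φ k) (φ (k - m)) := by
  have hstep (j : ℕ) : Summable fun k => dist (φ (k - j)) (φ (k - (j + 1 : ℕ))) := by
    refine ((Equiv.subRight ((j + 1 : ℕ) : ℤ)).summable_iff.2 hφ.summable_dist_add_one).congr
      fun k => ?_
    simp only [Function.comp_apply, Equiv.subRight_apply]
    congr 2; push_cast; ring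
  refine Summable.of_nonneg_of_le (fun _ => dist_nonneg) (fun k => ?_)
    (summable_sum fun j (_ : j ∈ Finset.range m) => hstep j)
  simpa using dist_le_range_sum_dist (fun j : ℕ => φ (k - j)) m

end BoundedVariation

section TermwiseDerivative

variable {ι E : Type*} [Countable ι] [NormedAddCommGroup E] [NormedSpace ℝ E] [CompleteSpace E]
  {F : ι → ℝ → E} {C : ℝ}

theorem hasSum_intervalIntegral_of_tsum_norm_le (hF : ∀ i, Continuous (F i))
    (hsum : ∀ x, Summable fun i => ‖F i x‖) (hC : ∀ x, ∑' i, ‖F i x‖ ≤ C) (a b : ℝ) :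
    HasSum (fun i => ∫ x in a..b, F i x) (∫ x in a..b, ∑' i, F i x) := by
  have hbound : IntervalIntegrable (fun x => ∑' i, ‖F i x‖) volume a b :=
    (intervalIntegrable_const (c := C)).mono_fun
      (Measurable.tsum fun i => (hF i).norm.measurable).aestronglyMeasurable
      (ae_of_all _ fun x => by
        simpa [Real.norm_eq_abs, abs_of_nonneg (tsum_nonneg fun i => norm_nonneg (F i x))]
          using (hC x).trans (le_abs_self C))
  exact intervalIntegral.hasSum_integral_of_dominated_convergence (fun i x => ‖F i x‖)
    (fun i => (hF i).aestronglyMeasurable) (fun i => ae_of_all _ fun _ _ => le_rfl)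
    (ae_of_all _ fun x _ => hsum x) hbound (ae_of_all _ fun x _ => (hsum x).of_norm.hasSum)

theorem hasDerivAt_tsum_of_continuous_tsum_deriv {f : ι → ℝ → E}
    (hf : ∀ i x, HasDerivAt (f i) (F i x) x) (hF : ∀ i, Continuous (F i))
    (hsum : ∀ x, Summable fun i => ‖F i x‖) (hC : ∀ x, ∑' i, ‖F i x‖ ≤ C)
    (hcont : Continuous fun x => ∑' i, F i x) {x₀ : ℝ} (h₀ : Summable fun i => f i x₀) (x : ℝ) :
    HasDerivAt (fun y => ∑' i, f i y) (∑' i, F i x) x := by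
  have hprim (y : ℝ) : ∑' i, f i y = ∑' i, f i x₀ + ∫ s in x₀..y, ∑' i, F i s := by
    have hdiff : HasSum (fun i => f i y - f i x₀) (∫ s in x₀..y, ∑' i, F i s) := by
      convert hasSum_intervalIntegral_of_tsum_norm_le hF hsum hC x₀ y using 1
      funext i
      exact (intervalIntegral.integral_eq_sub_of_hasDerivAt (fun s _ => hf i s)
        ((hF i).intervalIntegrable _ _)).symm
    rw [add_comm, ← (hdiff.add h₀.hasSum).tsum_eq]
    simp only [sub_add_cancel]
  rw [funext hprim]
  exact ((hcont.integral_hasStrictDerivAt x₀ x).hasDerivAt).const_add _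

end TermwiseDerivative

theorem tsum_mul_sub_mul_add_eq_tsum_sub_mul {R : Type*} [Ring R] [TopologicalSpace R]
    [IsTopologicalAddGroup R] [T2Space R] {c ψ : ℤ → R} (n : ℤ)
    (h₁ : Summable fun k => c k * ψ k) (h₂ : Summable fun k => c k * ψ (k + n)) :
    ∑' k, (c k * ψ k - c k * ψ (k + n)) = ∑' k, (c k - c (k - n)) * ψ k := by
  have h₂' : Summable fun k => c (k - n) * ψ k := by
    simpa [Function.comp_def] using (Equiv.subRight n).summable_iff.2 h₂
  have hshift : ∑' k, c k * ψ (k + n) = ∑' k, c (k - n) * ψ k := by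
    simpa [Function.comp_def] using ((Equiv.subRight n).tsum_eq fun k => c k * ψ (k + n)).symm
  simp only [sub_mul]
  rw [h₁.tsum_sub h₂, hshift, h₁.tsum_sub h₂']

theorem hasDerivAt_integral_comp_add {χ : ℝ → ℝ} (hχ : Continuous χ) (a x : ℝ) :
    HasDerivAt (fun x => ∫ v in -a..a, χ (x + v)) (χ (x + a) - χ (x - a)) x := by
  have hprim (y : ℝ) : HasDerivAt (fun u => ∫ v in (0 : ℝ)..u, χ v) (χ y) y :=
    (hχ.integral_hasStrictDerivAt 0 y).hasDerivAt
  have heq : (fun x => ∫ v in -a..a, χ (x + v)) =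
      fun x => (∫ v in (0 : ℝ)..x + a, χ v) - ∫ v in (0 : ℝ)..x - a, χ v := by
    funext x
    rw [intervalIntegral.integral_comp_add_left, intervalIntegral.integral_interval_sub_left
      (hχ.intervalIntegrable _ _) (hχ.intervalIntegrable _ _), sub_eq_add_neg]
  rw [heq]
  exact ((hprim _).comp_add_const x a).sub ((hprim _).comp_sub_const x a)

theorem continuous_tsum_mul_comp_sub_add {χ : ℝ → ℝ} {A : ℝ} (hχ : Continuous χ)
    (hχA : ∀ y, |χ y| ≤ A) {d : ℤ → ℝ} (hd : Summable fun k => |d k|) (a : ℝ) :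
    Continuous fun s => ∑' k : ℤ, d k * χ (s - k + a) :=
  continuous_tsum (fun k => by fun_prop) (hd.mul_right A) fun k s => by
    rw [norm_mul, Real.norm_eq_abs, Real.norm_eq_abs]
    exact mul_le_mul_of_nonneg_left (hχA _) (abs_nonneg _)

section SamplingSeries

variable {χ : ℝ → ℝ} {A M : ℝ} {c : ℤ → ℝ}

theorem norm_mul_comp_sub_le (hc : ∀ k, |c k| ≤ M) (y : ℝ) (k : ℤ) :
    ‖c k * χ (y - k)‖ ≤ M * |χ (y - k)| := by
  rw [norm_mul, Real.norm_eq_abs, Real.norm_eq_abs]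
  exact mul_le_mul_of_nonneg_right (hc k) (abs_nonneg _)

variable (hc : ∀ k, |c k| ≤ M) (habs : ∀ u : ℝ, Summable fun k : ℤ => |χ (u - k)|)
include hc habs

theorem summable_norm_mul_comp_sub (y : ℝ) : Summable fun k => ‖c k * χ (y - k)‖ :=
  ((habs y).mul_left M).of_nonneg_of_le (fun _ => norm_nonneg _) (norm_mul_comp_sub_le hc y)

theorem summable_norm_mul_comp_sub_sub (y z : ℝ) :
    Summable fun k => ‖c k * χ (y - k) - c k * χ (z - k)‖ :=
  ((summable_norm_mul_comp_sub hc habs y).add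
    (summable_norm_mul_comp_sub hc habs z)).of_nonneg_of_le (fun _ => norm_nonneg _)
      fun _ => norm_sub_le _ _

theorem tsum_mul_comp_sub_sub_eq_tsum_sub_mul (m : ℕ) (s : ℝ) :
    ∑' k, (c k * χ (s + m / 2 - k) - c k * χ (s - m / 2 - k)) =
      ∑' k, (c k - c (k - m)) * χ (s - k + m / 2) := by
  have hshift (k : ℤ) : χ (s + m / 2 - ((k + m : ℤ) : ℝ)) = χ (s - m / 2 - k) := by
    congr 1; push_cast; ring
  have h₂ : Summable fun k : ℤ => c k * χ (s + m / 2 - ((k + m : ℤ) : ℝ)) := by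
    simpa only [hshift] using (summable_norm_mul_comp_sub hc habs (s - m / 2)).of_norm
  simpa only [hshift, sub_add_eq_add_sub] using tsum_mul_sub_mul_add_eq_tsum_sub_mul
    (ψ := fun k : ℤ => χ (s + m / 2 - k)) m (summable_norm_mul_comp_sub hc habs _).of_norm h₂

variable (hA : ∀ u : ℝ, ∑' k : ℤ, |χ (u - k)| ≤ A)
include hA

theorem tsum_norm_mul_comp_sub_le (y : ℝ) : ∑' k, ‖c k * χ (y - k)‖ ≤ M * A := by
  have hM : 0 ≤ M := (abs_nonneg _).trans (hc 0)
  calc ∑' k : ℤ, ‖c k * χ (y - k)‖ ≤ ∑' k : ℤ, M * |χ (y - k)| :=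
        (summable_norm_mul_comp_sub hc habs y).tsum_le_tsum (norm_mul_comp_sub_le hc y)
          ((habs y).mul_left M)
    _ = M * ∑' k : ℤ, |χ (y - k)| := tsum_mul_left
    _ ≤ M * A := mul_le_mul_of_nonneg_left (hA y) hM

theorem tsum_norm_mul_comp_sub_sub_le (y z : ℝ) :
    ∑' k, ‖c k * χ (y - k) - c k * χ (z - k)‖ ≤ M * A + M * A := by
  have hy := summable_norm_mul_comp_sub hc habs y
  have hz := summable_norm_mul_comp_sub hc habs z
  refine ((summable_norm_mul_comp_sub_sub hc habs y z).tsum_le_tsum (fun _ => norm_sub_le _ _)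
    (hy.add hz)).trans ?_
  rw [hy.tsum_add hz]
  exact add_le_add (tsum_norm_mul_comp_sub_le hc habs hA y)
    (tsum_norm_mul_comp_sub_le hc habs hA z)

variable (hχ : Continuous χ)
include hχ

theorem summable_mul_integral_comp_add (a x : ℝ) :
    Summable fun k => c k * ∫ v in -a..a, χ (x - k + v) := by
  refine (hasSum_intervalIntegral_of_tsum_norm_le (F := fun k v => c k * χ (x + v - k))
    (fun k => by fun_prop) (fun v => summable_norm_mul_comp_sub hc habs (x + v))
    (fun v => tsum_norm_mul_comp_sub_le hc habs hA (x + v)) (-a) a).summable.congr fun k => ?_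
  simp only [intervalIntegral.integral_const_mul, sub_add_eq_add_sub]

theorem hasDerivAt_tsum_mul_integral_comp_add (m : ℕ)
    (hdiff : Summable fun k => |c k - c (k - m)|) (x : ℝ) :
    HasDerivAt (fun x => ∑' k, c k * ∫ v in -((m : ℝ) / 2)..(m : ℝ) / 2, χ (x - k + v))
      (∑' k, (c k - c (k - m)) * χ (x - k + m / 2)) x := by
  have hterm (k : ℤ) (s : ℝ) :
      HasDerivAt (fun x => c k * ∫ v in -((m : ℝ) / 2)..(m : ℝ) / 2, χ (x - k + v))
        (c k * χ (s + m / 2 - k) - c k * χ (s - m / 2 - k)) s := by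
    have := ((hasDerivAt_integral_comp_add hχ (m / 2) (s - k)).comp_sub_const s (k : ℝ)).const_mul
      (c k)
    rwa [sub_add_eq_add_sub, sub_right_comm, mul_sub] at this
  have hχA (y : ℝ) : |χ y| ≤ A := by
    simpa using ((habs y).le_tsum 0 fun _ _ => abs_nonneg _).trans (hA y)
  have hcont := continuous_tsum_mul_comp_sub_add hχ hχA hdiff (m / 2)
  simp only [← tsum_mul_comp_sub_sub_eq_tsum_sub_mul hc habs m] at hcont ⊢
  exact hasDerivAt_tsum_of_continuous_tsum_deriv hterm (fun k => by fun_prop)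
    (fun s => summable_norm_mul_comp_sub_sub hc habs _ _)
    (fun s => tsum_norm_mul_comp_sub_sub_le hc habs hA _ _) hcont
    (summable_mul_integral_comp_add hc habs hA hχ _ 0) x

end SamplingSeries

theorem avgSamplingSeries_eq (χ f : ℝ → ℝ) (m : ℕ) (w t : ℝ) :
    avgSamplingSeries χ f m w t =
      (1 / (m : ℝ)) *
        ∑' k : ℤ, f (k / w) * ∫ v in -((m : ℝ) / 2)..(m : ℝ) / 2, χ (w * t - k + v) := by
  simp only [avgSamplingSeries, avgKernel, ← tsum_mul_left, mul_left_comm]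

theorem stmt6_general (χ f : ℝ → ℝ) (M : ℝ)
    (hBV : BoundedVariationOn f Set.univ) (hf : ∀ x : ℝ, |f x| ≤ M)
    (hcont : Continuous χ) (A : ℝ)
    (habs : ∀ u : ℝ, Summable fun k : ℤ => |χ (u - k)|)
    (hA : ∀ u : ℝ, ∑' k : ℤ, |χ (u - k)| ≤ A)
    (m : ℕ) (w : ℝ) (hw : 0 < w) :
    ∀ t : ℝ,
      HasDerivAt (avgSamplingSeries χ f m w)
        ((w / (m : ℝ)) * ∑' k : ℤ,
          (f ((k : ℝ) / w) - f (((k : ℝ) - (m : ℝ)) / w)) *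
            χ (w * t - (k : ℝ) + (m : ℝ) / 2)) t := by
  intro t
  set c : ℤ → ℝ := fun k => f (k / w)
  have hc_bv : BoundedVariationOn c Set.univ :=
    ne_top_of_le_ne_top hBV <| eVariationOn.comp_le_of_monotoneOn f (fun k : ℤ => (k : ℝ) / w)
      (fun a _ b _ hab => div_le_div_of_nonneg_right (Int.cast_le.2 hab) hw.le)
      (Set.mapsTo_univ _ _)
  have hdiff : Summable fun k => |c k - c (k - m)| := by
    simpa only [Real.dist_eq] using hc_bv.summable_dist_sub_natCast m
  have hderiv := ((hasDerivAt_tsum_mul_integral_comp_add (fun k => hf _) habs hA hcont m hdiff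
    (w * t)).comp t ((hasDerivAt_id t).const_mul w)).const_mul (1 / (m : ℝ))
  rw [funext (avgSamplingSeries_eq χ f m w)]
  refine hderiv.congr_deriv ?_
  push_cast
  ring

theorem stmt6 (χ f : ℝ → ℝ) (M : ℝ)
    (hBV : BoundedVariationOn f Set.univ) (hf : ∀ x : ℝ, |f x| ≤ M)
    (hcont : Continuous χ) (hint : Integrable χ) (A : ℝ)
    (habs : ∀ u : ℝ, Summable fun k : ℤ => |χ (u - k)|)
    (hA : ∀ u : ℝ, ∑' k : ℤ, |χ (u - k)| ≤ A)
    (m : ℕ) (hm : 1 ≤ m) (w : ℝ) (hw : 0 < w) :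
    ∀ t : ℝ,
      HasDerivAt (avgSamplingSeries χ f m w)
        ((w / (m : ℝ)) * ∑' k : ℤ,
          (f ((k : ℝ) / w) - f (((k : ℝ) - (m : ℝ)) / w)) *
            χ (w * t - (k : ℝ) + (m : ℝ) / 2)) t :=
  stmt6_general χ f M hBV hf hcont A habs hA m w hw
end
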